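/- arXiv:0903.3856 — 4 statements merged into one kernel-verified Lean document; each statement's English description precedes it below -/
import Mathlib

section
/- Let k be a field of characteristic ≠ 2, 3. If t, b ∈ k satisfy b² = 4t⁴ - 8t³ + 8t² + 4t + 1 and t ≠ 0, then the point (x, y) with x = (1 + b + 2t)/(2t²) and y = (1 + b + 3t + bt + 4t² - 2t³)/(2t³) satisfies y² = x(x + 3)(x - 1). -/
/- With `U = 1 + b + 2t` and `Y = 1 + b + 3t + bt + 4t² - 2t³` the point is `(U / 2t², Y / 2t³)`,
so this is the curve equation multiplied by `8t⁶`. -/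
theorem two_mul_sq_eq_of_sq_eq_quartic {R : Type*} [CommRing R] {t b : R}
    (hb : b ^ 2 = 4 * t ^ 4 - 8 * t ^ 3 + 8 * t ^ 2 + 4 * t + 1) :
    2 * (1 + b + 3 * t + b * t + 4 * t ^ 2 - 2 * t ^ 3) ^ 2 =
      (1 + b + 2 * t) * (1 + b + 2 * t + 6 * t ^ 2) * (1 + b + 2 * t - 2 * t ^ 2) := by
  linear_combination (-(1 + b + 2 * t + 2 * t ^ 2)) * hb

theorem stmt_5_general (k : Type*) [Field k] (h2 : (2 : k) ≠ 0)
    (t b : k) (ht : t ≠ 0)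
    (hb : b ^ 2 = 4 * t ^ 4 - 8 * t ^ 3 + 8 * t ^ 2 + 4 * t + 1) :
    ((1 + b + 3 * t + b * t + 4 * t ^ 2 - 2 * t ^ 3) / (2 * t ^ 3)) ^ 2 =
      ((1 + b + 2 * t) / (2 * t ^ 2)) * ((1 + b + 2 * t) / (2 * t ^ 2) + 3) *
        ((1 + b + 2 * t) / (2 * t ^ 2) - 1) := by
  field_simp
  linear_combination two_mul_sq_eq_of_sq_eq_quartic hb

/-- If b² = 4t⁴ - 8t³ + 8t² + 4t + 1 and t ≠ 0 in a field of char ≠ 2,3, then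
x = (1 + b + 2t)/(2t²), y = (1 + b + 3t + bt + 4t² - 2t³)/(2t³) satisfy
y² = x(x + 3)(x - 1). -/
theorem stmt_5 (k : Type*) [Field k] (h2 : (2 : k) ≠ 0) (h3 : (3 : k) ≠ 0)
    (t b : k) (ht : t ≠ 0)
    (hb : b ^ 2 = 4 * t ^ 4 - 8 * t ^ 3 + 8 * t ^ 2 + 4 * t + 1) :
    ((1 + b + 3 * t + b * t + 4 * t ^ 2 - 2 * t ^ 3) / (2 * t ^ 3)) ^ 2 =
      ((1 + b + 2 * t) / (2 * t ^ 2)) * ((1 + b + 2 * t) / (2 * t ^ 2) + 3) *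
        ((1 + b + 2 * t) / (2 * t ^ 2) - 1) :=
  stmt_5_general k h2 t b ht hb
end

section
/- Let k be a field of characteristic ≠ 2, 3. If x, y ∈ k satisfy y² = x(x + 3)(x - 1) with x ≠ ±1, and t = (x + y - 1)/(x² - 1), b = (x³ + 5x² + 2xy - 2y - x + 3)/((x² - 1)(x + 1)), then the squares (2t² - 4t - 1)², b², (2t² + 1)², (2t² + 2t - 1)² form an arithmetic progression in k. -/
/-!
With `p = 2t² - 2t` and `q = 2t + 1` the first and third squares are `(p - q)²` and `(p + q)²`,
so by `(p - q)² + (p + q)² = 2(p² + q²)` the first progression condition says `b² = p² + q²`,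
and the second one turns out to be equivalent to it as well. The map `(x, y) ↦ (t, b)` sends the
cubic `y² = x(x + 3)(x - 1)` into the quartic `b² = (2t² - 2t)² + (2t + 1)²`, which is checked by
clearing denominators and reducing modulo the cubic.
-/

theorem arithProg_squares_of_sq_eq {R : Type*} [CommRing R] {t b : R}
    (h : b ^ 2 = (2 * t ^ 2 - 2 * t) ^ 2 + (2 * t + 1) ^ 2) :
    (2 * t ^ 2 - 4 * t - 1) ^ 2 + (2 * t ^ 2 + 1) ^ 2 = 2 * b ^ 2 ∧
    b ^ 2 + (2 * t ^ 2 + 2 * t - 1) ^ 2 = 2 * (2 * t ^ 2 + 1) ^ 2 :=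
  ⟨by linear_combination (-2) * h, by linear_combination h⟩

theorem sq_eq_quartic_of_cubic {k : Type*} [Field k] {x y t b : k} (hx1 : x ≠ 1) (hx2 : x ≠ -1)
    (hxy : y ^ 2 = x * (x + 3) * (x - 1))
    (ht : t = (x + y - 1) / (x ^ 2 - 1))
    (hb : b = (x ^ 3 + 5 * x ^ 2 + 2 * x * y - 2 * y - x + 3) / ((x ^ 2 - 1) * (x + 1))) :
    b ^ 2 = (2 * t ^ 2 - 2 * t) ^ 2 + (2 * t + 1) ^ 2 := by
  have hm : x - 1 ≠ 0 := sub_ne_zero.mpr hx1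
  have hp : x + 1 ≠ 0 := fun h => hx2 (eq_neg_of_add_eq_zero_left h)
  have hd : x ^ 2 - 1 ≠ 0 := by
    rw [show x ^ 2 - 1 = (x - 1) * (x + 1) by ring]
    exact mul_ne_zero hm hp
  subst ht hb
  field_simp
  linear_combination (-4) * ((x + 1) ^ 2 * y ^ 2 - 2 * (x ^ 2 - 1) ^ 2 * y
    + (x ^ 6 + x ^ 5 + 3 * x ^ 4 + 2 * x ^ 3 - 5 * x ^ 2 - 3 * x + 1)) * hxy

theorem stmt_7_general (k : Type*) [Field k]
    (x y : k) (hx1 : x ≠ 1) (hx2 : x ≠ -1)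
    (hxy : y ^ 2 = x * (x + 3) * (x - 1))
    (t b : k) (ht : t = (x + y - 1) / (x ^ 2 - 1))
    (hb : b = (x ^ 3 + 5 * x ^ 2 + 2 * x * y - 2 * y - x + 3) /
        ((x ^ 2 - 1) * (x + 1))) :
    (2 * t ^ 2 - 4 * t - 1) ^ 2 + (2 * t ^ 2 + 1) ^ 2 = 2 * b ^ 2 ∧
    b ^ 2 + (2 * t ^ 2 + 2 * t - 1) ^ 2 = 2 * (2 * t ^ 2 + 1) ^ 2 :=
  arithProg_squares_of_sq_eq (sq_eq_quartic_of_cubic hx1 hx2 hxy ht hb)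

/-- If y² = x(x + 3)(x - 1) in a field of char ≠ 2,3 with x ≠ ±1, and
t = (x + y - 1)/(x² - 1), b = (x³ + 5x² + 2xy - 2y - x + 3)/((x² - 1)(x + 1)),
then (2t² - 4t - 1)², b², (2t² + 1)², (2t² + 2t - 1)² form an arithmetic
progression in k. -/
theorem stmt_7 (k : Type*) [Field k] (h2 : (2 : k) ≠ 0) (h3 : (3 : k) ≠ 0)
    (x y : k) (hx1 : x ≠ 1) (hx2 : x ≠ -1)
    (hxy : y ^ 2 = x * (x + 3) * (x - 1))
    (t b : k) (ht : t = (x + y - 1) / (x ^ 2 - 1))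
    (hb : b = (x ^ 3 + 5 * x ^ 2 + 2 * x * y - 2 * y - x + 3) /
        ((x ^ 2 - 1) * (x + 1))) :
    (2 * t ^ 2 - 4 * t - 1) ^ 2 + (2 * t ^ 2 + 1) ^ 2 = 2 * b ^ 2 ∧
    b ^ 2 + (2 * t ^ 2 + 2 * t - 1) ^ 2 = 2 * (2 * t ^ 2 + 1) ^ 2 :=
  stmt_7_general k x y hx1 hx2 hxy t b ht hb
end

section
/- There is no non-constant arithmetic progression of four squares of integers; that is, if a, b, c, d ∈ ℤ with a² + c² = 2b² and b² + d² = 2c², then a² = b² = c² = d². -/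
/-!
Write the progression as `a = p - q`, `c = p + q`, `b = s - t`, `d = s + t`; then `p q = s t` and
`s² + t² = (p + q)²`. The four-number factorization `p = A B`, `q = C D`, `s = A C`, `t = B D`
with `B`, `C` coprime turns this into `B⁴ - B² C² + C⁴ = F²`. Parametrizing the primitive
Pythagorean triple `(x² - y², x y, z)` reduces that quartic to a solution of `A² + D² = □`,
`4 A² + D² = □` with `A D ≠ 0`, and Euler's descent on this pair (once more through Pythagorean
triples and the four-number factorization) shows that there is none.
-/

namespace Int

theorem exists_eq_mul_of_mul_eq_mul {a b c d : ℤ} (ha : a ≠ 0) (h : a * b = c * d) :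
    ∃ A B C D : ℤ, a = A * B ∧ b = C * D ∧ c = A * C ∧ d = B * D ∧ IsCoprime B C ∧
      (IsCoprime a b → IsCoprime A D) := by
  obtain ⟨B, C, hBC, hB, hC⟩ := Int.exists_gcd_one (Int.gcd_pos_of_ne_zero_left c ha)
  set A : ℤ := (a.gcd c : ℤ)
  have hA : A ≠ 0 := Int.natCast_ne_zero.mpr (Int.gcd_pos_of_ne_zero_left c ha).ne'
  have hBC : IsCoprime B C := Int.isCoprime_iff_gcd_eq_one.mpr hBC
  have hB0 : B ≠ 0 := by rintro rfl; simp_all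
  have hBb : B * b = C * d := mul_right_cancel₀ hA (by linear_combination h - b * hB + d * hC)
  obtain ⟨D, rfl⟩ : B ∣ d := hBC.dvd_of_dvd_mul_left ⟨b, hBb.symm⟩
  have hb : b = C * D := mul_left_cancel₀ hB0 (by linear_combination hBb)
  refine ⟨A, B, C, D, by rw [hB, mul_comm], hb, by rw [hC, mul_comm], rfl, hBC, fun hab => ?_⟩
  exact (hab.of_isCoprime_of_dvd_left ⟨B, by rw [hB, mul_comm]⟩).of_isCoprime_of_dvd_right
    ⟨C, by rw [hb, mul_comm]⟩

theorem sq_sub_sq_ne_sq_sub_sq {r s u v : ℤ} (hr : Odd r) (hs : Even s) (hu : Even u)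
    (hv : Odd v) : r ^ 2 - s ^ 2 ≠ u ^ 2 - v ^ 2 := by
  obtain ⟨r, rfl⟩ := hr
  obtain ⟨s, rfl⟩ := hs
  obtain ⟨u, rfl⟩ := hu
  obtain ⟨v, rfl⟩ := hv
  intro h
  have : 4 * (r ^ 2 + r - s ^ 2 - u ^ 2 + v ^ 2 + v) = -2 := by linear_combination h
  omega

theorem sq_add_sq_ne_sq_of_odd {a b c : ℤ} (ha : Odd a) (hb : Odd b) : a ^ 2 + b ^ 2 ≠ c ^ 2 := by
  obtain ⟨a, rfl⟩ := ha
  obtain ⟨b, rfl⟩ := hb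
  intro h
  rcases Int.even_or_odd' c with ⟨c, rfl | rfl⟩
  · have : 4 * (a ^ 2 + a + b ^ 2 + b - c ^ 2) = -2 := by linear_combination h
    omega
  · have : 4 * (a ^ 2 + a + b ^ 2 + b - c ^ 2 - c) = -1 := by linear_combination h
    omega

theorem three_dvd_of_three_dvd_sq_add_sq {a b : ℤ} (h : 3 ∣ a ^ 2 + b ^ 2) : 3 ∣ a ∧ 3 ∣ b := by
  have key : ∀ x y : ZMod 3, x ^ 2 + y ^ 2 = 0 → x = 0 ∧ y = 0 := by decide
  have h3 := fun n : ℤ => ZMod.intCast_zmod_eq_zero_iff_dvd n 3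
  push_cast at h3
  simp only [← h3] at h ⊢
  push_cast at h
  exact key _ _ h

theorem isCoprime_sq_sub_sq_mul {x y : ℤ} (h : IsCoprime x y) :
    IsCoprime (x ^ 2 - y ^ 2) (x * y) := by
  refine IsCoprime.mul_right ?_ ?_
  · rw [show x ^ 2 - y ^ 2 = -y ^ 2 + x * x by ring]
    exact (h.symm.pow_left.neg_left).add_mul_left_left x
  · rw [show x ^ 2 - y ^ 2 = x ^ 2 + y * -y by ring]
    exact h.pow_left.add_mul_left_left (-y)

theorem exists_sq_eq_of_sq_mul_eq_sq {g n b : ℤ} (hg : g ≠ 0) (h : g ^ 2 * n = b ^ 2) :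
    ∃ c, n = c ^ 2 := by
  obtain ⟨c, rfl⟩ := (Int.pow_dvd_pow_iff two_ne_zero).mp ⟨n, h.symm⟩
  exact ⟨c, mul_left_cancel₀ (pow_ne_zero 2 hg) (by linear_combination h)⟩

theorem odd_of_isCoprime_of_even {x y : ℤ} (h : IsCoprime x y) (hx : Even x) : Odd y := by
  refine Int.not_even_iff_odd.mp fun hy => ?_
  have := h.isUnit_of_dvd' (even_iff_two_dvd.mp hx) (even_iff_two_dvd.mp hy)
  norm_num [Int.isUnit_iff] at this

theorem even_add_of_sq_add_sq_eq_two_mul_sq {a b c : ℤ} (h : a ^ 2 + c ^ 2 = 2 * b ^ 2) :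
    Even (a + c) := by
  have : Even (a ^ 2 + c ^ 2) := ⟨b ^ 2, by rw [h]; ring⟩
  simpa [Int.even_add, Int.even_pow] using this

end Int

theorem PythagoreanTriple.exists_of_odd_left {x y z : ℤ} (h : PythagoreanTriple x y z)
    (hxy : IsCoprime x y) (hx : Odd x) :
    ∃ m n, x = m ^ 2 - n ^ 2 ∧ y = 2 * (m * n) ∧ IsCoprime m n ∧ Odd (m + n) := by
  obtain ⟨m, n, hxy' | ⟨hx', -⟩, hmn, hpar⟩ :=
    h.isPrimitiveClassified_of_coprime (Int.isCoprime_iff_gcd_eq_one.mp hxy)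
  · refine ⟨m, n, hxy'.1, by rw [hxy'.2, mul_assoc], Int.isCoprime_iff_gcd_eq_one.mpr hmn, ?_⟩
    rw [Int.odd_iff]
    omega
  · exact absurd hx (Int.not_odd_iff_even.mpr ⟨m * n, by rw [hx']; ring⟩)

/-- `(1, 4)` is a concordant pair of forms in Euler's sense iff this holds for some `A D ≠ 0`. -/
def ConcordantOneFour (A D : ℤ) : Prop :=
  ∃ B C : ℤ, A ^ 2 + D ^ 2 = B ^ 2 ∧ 4 * A ^ 2 + D ^ 2 = C ^ 2

theorem sq_add_sq_eq_of_sq_mul_eq_sq_mul {A D B C : ℤ} (hAD : IsCoprime A D)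
    (hBC : IsCoprime B C) (hB : B ≠ 0)
    (h : B ^ 2 * (4 * A ^ 2 + D ^ 2) = C ^ 2 * (A ^ 2 + D ^ 2)) :
    A ^ 2 + D ^ 2 = B ^ 2 ∧ 4 * A ^ 2 + D ^ 2 = C ^ 2 := by
  obtain ⟨k, hk⟩ : B ^ 2 ∣ A ^ 2 + D ^ 2 := hBC.pow.dvd_of_dvd_mul_left ⟨_, h.symm⟩
  have h4k : 4 * A ^ 2 + D ^ 2 = C ^ 2 * k :=
    mul_left_cancel₀ (pow_ne_zero 2 hB) (by linear_combination h + C ^ 2 * hk)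
  have hk3 : k ∣ 3 := by
    obtain ⟨α, β, hαβ⟩ := hAD.pow (m := 2) (n := 2)
    have hA : k ∣ 3 * A ^ 2 := ⟨C ^ 2 - B ^ 2, by linear_combination h4k - hk⟩
    have hD : k ∣ 3 * D ^ 2 := ⟨4 * B ^ 2 - C ^ 2, by linear_combination 4 * hk - h4k⟩
    rw [show (3 : ℤ) = α * (3 * A ^ 2) + β * (3 * D ^ 2) by linear_combination -3 * hαβ]
    exact dvd_add (hA.mul_left α) (hD.mul_left β)
  have hk0 : 0 < k := by
    have : 0 < A ^ 2 + D ^ 2 := by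
      rcases eq_or_ne A 0 with rfl | hA
      · have : D ≠ 0 := by rintro rfl; exact not_isCoprime_zero_zero hAD
        positivity
      · positivity
    nlinarith [sq_nonneg B]
  have hk3' : k ≤ 3 := Int.le_of_dvd three_pos hk3
  interval_cases k
  · constructor <;> linarith
  · norm_num at hk3
  · obtain ⟨h3A, h3D⟩ := Int.three_dvd_of_three_dvd_sq_add_sq (a := A) (b := D)
      ⟨B ^ 2, by linear_combination hk⟩
    have := hAD.isUnit_of_dvd' h3A h3D
    norm_num [Int.isUnit_iff] at this

theorem exists_concordantOneFour_of_mul_eq_mul {ρ s u v : ℤ} (hρs : IsCoprime ρ s)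
    (hmul : ρ * s = u * v) (hsq : 4 * ρ ^ 2 - s ^ 2 = u ^ 2 - v ^ 2) (hu : u ≠ 0) (hv : v ≠ 0) :
    ∃ P S, ConcordantOneFour P S ∧ P ≠ 0 ∧ S ≠ 0 ∧ P ∣ u ∧ S ∣ v := by
  have hρ : ρ ≠ 0 := by rintro rfl; simp_all
  obtain ⟨A, B, C, D, rfl, rfl, rfl, rfl, hBC, hAD⟩ := Int.exists_eq_mul_of_mul_eq_mul hρ hmul
  refine ⟨A, D, ⟨B, C, sq_add_sq_eq_of_sq_mul_eq_sq_mul (hAD hρs) hBC (right_ne_zero_of_mul hρ)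
    (by linear_combination hsq)⟩, left_ne_zero_of_mul hu, right_ne_zero_of_mul hv,
    dvd_mul_right A C, dvd_mul_left D B⟩

theorem exists_concordantOneFour_of_sq_sub_sq_eq {r s u v : ℤ} (hrs : IsCoprime r s)
    (huv : Odd (u + v)) (hsq : r ^ 2 - s ^ 2 = u ^ 2 - v ^ 2) (hmul : r * s = 2 * (u * v))
    (hu : u ≠ 0) (hv : v ≠ 0) :
    ∃ P S, ConcordantOneFour P S ∧ P ≠ 0 ∧ S ≠ 0 ∧ P ∣ u * v ∧ S ∣ u * v := by
  wlog hu' : Even u generalizing r s u v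
  · rw [mul_comm u v]
    refine this hrs.symm (by rwa [add_comm]) (by linear_combination -hsq)
      (by linear_combination hmul) hv hu ?_
    simpa [Int.odd_add, Int.not_even_iff_odd.mp hu'] using huv
  have hv' : Odd v := by simpa [Int.odd_add', hu'] using huv
  have hr : Even r := by
    by_contra hr
    have hs : Even s := by
      have : Even (r * s) := ⟨u * v, by rw [hmul]; ring⟩
      simpa [Int.even_mul, hr] using this
    exact Int.sq_sub_sq_ne_sq_sub_sq (Int.not_even_iff_odd.mp hr) hs hu' hv' hsq
  obtain ⟨ρ, rfl⟩ := even_iff_two_dvd.mp hr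
  obtain ⟨P, S, hPS, hP, hS, hPu, hSv⟩ := exists_concordantOneFour_of_mul_eq_mul
    (hrs.of_isCoprime_of_dvd_left (dvd_mul_left ρ 2))
    (mul_left_cancel₀ two_ne_zero (by linear_combination hmul)) (by linear_combination hsq) hu hv
  exact ⟨P, S, hPS, hP, hS, dvd_mul_of_dvd_left hPu v, dvd_mul_of_dvd_right hSv u⟩

namespace ConcordantOneFour

theorem of_mul {g A D : ℤ} (hg : g ≠ 0) (h : ConcordantOneFour (g * A) (g * D)) :
    ConcordantOneFour A D := by
  obtain ⟨B, C, h1, h2⟩ := h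
  obtain ⟨B', hB'⟩ := Int.exists_sq_eq_of_sq_mul_eq_sq (n := A ^ 2 + D ^ 2) (b := B) hg
    (by linear_combination h1)
  obtain ⟨C', hC'⟩ := Int.exists_sq_eq_of_sq_mul_eq_sq (n := 4 * A ^ 2 + D ^ 2) (b := C) hg
    (by linear_combination h2)
  exact ⟨B', C', hB', hC'⟩

theorem swap {A δ : ℤ} (h : ConcordantOneFour A (2 * δ)) : ConcordantOneFour δ A := by
  obtain ⟨B, C, h1, h2⟩ := h
  obtain ⟨C', hC'⟩ := Int.exists_sq_eq_of_sq_mul_eq_sq (g := 2) (n := δ ^ 2 + A ^ 2) (b := C)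
    two_ne_zero (by linear_combination h2)
  exact ⟨C', B, hC', by linear_combination h1⟩

theorem exists_isCoprime {A D : ℤ} (h : ConcordantOneFour A D) (hA : A ≠ 0) (hD : D ≠ 0) :
    ∃ A' D', ConcordantOneFour A' D' ∧ IsCoprime A' D' ∧ A' ≠ 0 ∧ D' ≠ 0 ∧
      A'.natAbs + D'.natAbs ≤ A.natAbs + D.natAbs := by
  obtain ⟨g, A', D', hg, hcop, rfl, rfl⟩ :=
    Int.exists_gcd_one' (Int.gcd_pos_of_ne_zero_left D hA)
  refine ⟨A', D', of_mul (Int.natCast_ne_zero.mpr hg.ne')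
    (by rwa [mul_comm _ A', mul_comm _ D']), Int.isCoprime_iff_gcd_eq_one.mpr hcop,
    left_ne_zero_of_mul hA, left_ne_zero_of_mul hD, ?_⟩
  simp only [Int.natAbs_mul, Int.natAbs_natCast]
  have := Nat.le_mul_of_pos_right A'.natAbs hg
  have := Nat.le_mul_of_pos_right D'.natAbs hg
  omega

theorem exists_of_even {A D : ℤ} (h : ConcordantOneFour A D) (hAD : IsCoprime A D)
    (hA : Even A) (hA0 : A ≠ 0) :
    ∃ P S, ConcordantOneFour P S ∧ P ≠ 0 ∧ S ≠ 0 ∧ P.natAbs + S.natAbs ≤ A.natAbs := by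
  obtain ⟨B, C, h1, h2⟩ := h
  have hD := Int.odd_of_isCoprime_of_even hAD hA
  obtain ⟨m, n, hDmn, hAmn, hmn, hmn_odd⟩ := PythagoreanTriple.exists_of_odd_left
    (z := B) (by unfold PythagoreanTriple; linear_combination h1) hAD.symm hD
  have h2D : IsCoprime D (2 * A) := by
    refine IsCoprime.mul_right ?_ hAD.symm
    obtain ⟨k, rfl⟩ := hD
    exact ⟨1, -k, by ring⟩
  obtain ⟨m', n', hDmn', hAmn', hmn', -⟩ := PythagoreanTriple.exists_of_odd_left
    (z := C) (by unfold PythagoreanTriple; linear_combination h2) h2D hD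
  have hmn0 : m * n ≠ 0 := by rintro h0; rw [h0] at hAmn; exact hA0 (by simpa using hAmn)
  obtain ⟨P, S, hPS, hP, hS, hPmn, hSmn⟩ := exists_concordantOneFour_of_sq_sub_sq_eq hmn'
    hmn_odd (hDmn'.symm.trans hDmn) (by linarith)
    (left_ne_zero_of_mul hmn0) (right_ne_zero_of_mul hmn0)
  refine ⟨P, S, hPS, hP, hS, ?_⟩
  have := Int.natAbs_le_of_dvd_ne_zero hPmn hmn0
  have := Int.natAbs_le_of_dvd_ne_zero hSmn hmn0
  rw [hAmn, Int.natAbs_mul, show Int.natAbs 2 = 2 from rfl]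
  omega

theorem exists_natAbs_add_lt {A D : ℤ} (h : ConcordantOneFour A D) (hAD : IsCoprime A D)
    (hA : A ≠ 0) (hD : D ≠ 0) :
    ∃ P S, ConcordantOneFour P S ∧ P ≠ 0 ∧ S ≠ 0 ∧
      P.natAbs + S.natAbs < A.natAbs + D.natAbs := by
  rcases Int.even_or_odd A with hAe | hAo
  · obtain ⟨P, S, hPS, hP, hS, hle⟩ := h.exists_of_even hAD hAe hA
    exact ⟨P, S, hPS, hP, hS, by have := Int.natAbs_pos.mpr hD; omega⟩
  rcases Int.even_or_odd D with hDe | hDo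
  · obtain ⟨δ, rfl⟩ := even_iff_two_dvd.mp hDe
    refine ⟨δ, A, h.swap, right_ne_zero_of_mul hD, hA, ?_⟩
    have := Int.natAbs_pos.mpr (right_ne_zero_of_mul hD)
    norm_num [Int.natAbs_mul]
    omega
  · obtain ⟨B, -, h1, -⟩ := h
    exact absurd h1 (Int.sq_add_sq_ne_sq_of_odd hAo hDo)

theorem eq_zero_or_eq_zero {A D : ℤ} (h : ConcordantOneFour A D) : A = 0 ∨ D = 0 := by
  induction hn : A.natAbs + D.natAbs using Nat.strong_induction_on generalizing A D with
  | _ n ih =>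
    by_contra! hAD
    obtain ⟨A', D', h', hcop, hA', hD', hle⟩ := h.exists_isCoprime hAD.1 hAD.2
    obtain ⟨P, S, hPS, hP, hS, hlt⟩ := h'.exists_natAbs_add_lt hcop hA' hD'
    exact (ih _ (by omega) hPS rfl).elim hP hS

end ConcordantOneFour

theorem eq_zero_or_eq_zero_of_sq_sub_sq_eq {r s u v : ℤ} (hrs : IsCoprime r s)
    (huv : Odd (u + v)) (hsq : r ^ 2 - s ^ 2 = u ^ 2 - v ^ 2) (hmul : r * s = 2 * (u * v)) :
    u = 0 ∨ v = 0 := by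
  by_contra! h
  obtain ⟨P, S, hPS, hP, hS, -⟩ :=
    exists_concordantOneFour_of_sq_sub_sq_eq hrs huv hsq hmul h.1 h.2
  exact hPS.eq_zero_or_eq_zero.elim hP hS

theorem Int.mul_eq_zero_or_sq_eq_sq_of_pow_four_sub_add_eq_sq {x y z : ℤ} (hxy : IsCoprime x y)
    (h : x ^ 4 - x ^ 2 * y ^ 2 + y ^ 4 = z ^ 2) : x * y = 0 ∨ x ^ 2 = y ^ 2 := by
  have hT : PythagoreanTriple (x ^ 2 - y ^ 2) (x * y) z := by
    unfold PythagoreanTriple; linear_combination h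
  rcases Int.even_or_odd (x * y) with hxy_even | hxy_odd
  · have hodd : Odd (x ^ 2 - y ^ 2) := by
      rcases Int.even_mul.mp hxy_even with hx | hy
      · have := Int.odd_of_isCoprime_of_even hxy hx
        exact (Int.even_pow.mpr ⟨hx, two_ne_zero⟩).sub_odd this.pow
      · have := Int.odd_of_isCoprime_of_even hxy.symm hy
        exact this.pow.sub_even (Int.even_pow.mpr ⟨hy, two_ne_zero⟩)
    obtain ⟨m, n, hsq, hmul, -, hmn⟩ :=
      hT.exists_of_odd_left (Int.isCoprime_sq_sub_sq_mul hxy) hodd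
    left
    rcases eq_zero_or_eq_zero_of_sq_sub_sq_eq hxy hmn hsq hmul with h0 | h0 <;> simp [hmul, h0]
  · obtain ⟨hx, hy⟩ := Int.odd_mul.mp hxy_odd
    obtain ⟨m, n, hsq, hmul, hmn, -⟩ :=
      hT.symm.exists_of_odd_left (Int.isCoprime_sq_sub_sq_mul hxy).symm hxy_odd
    -- `x = U + V`, `y = U - V` turn `x y` into `U² - V²` and `x² - y²` into `4 U V`.
    obtain ⟨U, hU⟩ := hx.add_odd hy
    obtain ⟨U, V, rfl, rfl⟩ : ∃ U V, x = U + V ∧ y = U - V := ⟨U, x - U, by ring, by linarith⟩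
    right
    rcases eq_zero_or_eq_zero_of_sq_sub_sq_eq hmn hx (by linear_combination -hsq)
      (mul_left_cancel₀ two_ne_zero (by linear_combination -hmul)) with h0 | h0
    · linear_combination 4 * V * h0
    · linear_combination 4 * U * h0

theorem mul_eq_zero_of_mul_eq_mul_of_sq_add_sq_eq {p q s t : ℤ} (hmul : p * q = s * t)
    (hsq : s ^ 2 + t ^ 2 = (p + q) ^ 2) : p * q = 0 := by
  by_contra hpq
  obtain ⟨A, B, C, D, rfl, rfl, rfl, rfl, hBC, -⟩ :=
    Int.exists_eq_mul_of_mul_eq_mul (left_ne_zero_of_mul hpq) hmul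
  have hD : D ≠ 0 := right_ne_zero_of_mul (right_ne_zero_of_mul hpq)
  have hS : (A ^ 2 - D ^ 2) * (C ^ 2 - B ^ 2) = 2 * (A * B * C * D) := by
    linear_combination hsq
  obtain ⟨F, hF⟩ := Int.exists_sq_eq_of_sq_mul_eq_sq (n := B ^ 4 - B ^ 2 * C ^ 2 + C ^ 4)
    (b := (C ^ 2 - B ^ 2) * A - B * C * D) hD (by linear_combination -(C ^ 2 - B ^ 2) * hS)
  rcases Int.mul_eq_zero_or_sq_eq_sq_of_pow_four_sub_add_eq_sq hBC hF with h0 | h0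
  · exact hpq (by linear_combination A * D * h0)
  · exact hpq (mul_left_cancel₀ two_ne_zero (by linear_combination -hS - (A ^ 2 - D ^ 2) * h0))

/-- There is no non-constant arithmetic progression of four integer squares. -/
theorem stmt_9 (a b c d : ℤ) (h1 : a ^ 2 + c ^ 2 = 2 * b ^ 2)
    (h2 : b ^ 2 + d ^ 2 = 2 * c ^ 2) :
    a ^ 2 = b ^ 2 ∧ b ^ 2 = c ^ 2 ∧ c ^ 2 = d ^ 2 := by
  suffices hbc : b ^ 2 = c ^ 2 from ⟨by linarith, hbc, by linarith⟩
  obtain ⟨p, hp⟩ := Int.even_add_of_sq_add_sq_eq_two_mul_sq h1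
  obtain ⟨s, hs⟩ := Int.even_add_of_sq_add_sq_eq_two_mul_sq h2
  obtain ⟨q, rfl, rfl⟩ : ∃ q, a = p - q ∧ c = p + q := ⟨c - p, by linarith, by ring⟩
  obtain ⟨t, rfl, rfl⟩ : ∃ t, b = s - t ∧ d = s + t := ⟨d - s, by linarith, by ring⟩
  have hpq := mul_eq_zero_of_mul_eq_mul_of_sq_add_sq_eq (p := p) (q := q) (s := s) (t := t)
    (mul_left_cancel₀ four_ne_zero (by linear_combination -h1 - h2))
    (mul_left_cancel₀ two_ne_zero (by linear_combination h2))
  exact mul_left_cancel₀ two_ne_zero (by linear_combination -h1 - 4 * hpq)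
end

section
/- Over any field k of characteristic ≠ 2, 3, if there exists a point (x, y) ∈ k² with y² = x(x + 3)(x - 1) and x ∉ {0, 1, -1, -3, 3}, then there exists a non-constant arithmetic progression of four squares in k, i.e., elements a, b, c, d ∈ k with a² + c² = 2b², b² + d² = 2c², and not all of a², b², c², d² equal. -/
/-!
Parametrising the conic `a² + c² = 2b²` by `(a : b : c) = (p² - 2pq - q² : p² + q² : p² + 2pq - q²)`,
the second condition asks for `2c² - b²` to be a square. This quartic in `(p : q)` is birational
to `y² = x(x + 3)(x - 1)` through `(p : q) = (2x + y : 3 - x)`, with square root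
`d = p² + 4pq - (2x + 1)q²`. The common difference `b² - a² = 4pq(p - q)(p + q)` becomes
`4(3 - x)` times the product of the linear forms `2x + y`, `3x + y - 3`, `x + y + 3`: these are
lines through the point `(3, -6)` of the curve, and their norms show that they meet the curve
only at points with `x ∈ {0, 1, -1, -3, 3}`.
-/

theorem exists_four_sq_progression_of_curve {R : Type*} [CommRing R] {x y : R}
    (hxy : y ^ 2 = x * (x + 3) * (x - 1)) :
    ∃ a b c d : R, a ^ 2 + c ^ 2 = 2 * b ^ 2 ∧ b ^ 2 + d ^ 2 = 2 * c ^ 2 ∧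
      b ^ 2 - a ^ 2 = 4 * (3 - x) * ((2 * x + y) * (3 * x + y - 3) * (x + y + 3)) := by
  obtain ⟨p, hp⟩ : ∃ p, p = 2 * x + y := ⟨_, rfl⟩
  obtain ⟨q, hq⟩ : ∃ q, q = 3 - x := ⟨_, rfl⟩
  refine ⟨p ^ 2 - 2 * p * q - q ^ 2, p ^ 2 + q ^ 2, p ^ 2 + 2 * p * q - q ^ 2,
    p ^ 2 + 4 * p * q - (2 * x + 1) * q ^ 2, by ring, ?_, ?_⟩ <;> subst hp hq
  · linear_combination 4 * (3 - x) ^ 3 * hxy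
  · ring

theorem curve_lines_mul_ne_zero {K : Type*} [Field K] {x y : K}
    (hxy : y ^ 2 = x * (x + 3) * (x - 1)) (hx : x ∉ ({0, 1, -1, -3, 3} : Set K)) :
    (2 * x + y) * (3 * x + y - 3) * (x + y + 3) ≠ 0 := by
  simp only [Set.mem_insert_iff, Set.mem_singleton_iff, not_or] at hx
  obtain ⟨hx0, hx1, hxm1, hxm3, hx3⟩ := hx
  have hnorm : (2 * x + y) * (3 * x + y - 3) * (x + y + 3) *
      ((2 * x - y) * (3 * x - y - 3) * (x - y + 3)) =
      -(x * (x + 1) ^ 2 * (x - 1) * (x + 3) * (x - 3) ^ 4) := by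
    calc _ = ((2 * x) ^ 2 - y ^ 2) * ((3 * x - 3) ^ 2 - y ^ 2) * ((x + 3) ^ 2 - y ^ 2) := by ring
      _ = _ := by rw [hxy]; ring
  have hnorm_ne : x * (x + 1) ^ 2 * (x - 1) * (x + 3) * (x - 3) ^ 4 ≠ 0 := by
    simp [hx0, sub_ne_zero.mpr hx1, sub_ne_zero.mpr hx3, add_eq_zero_iff_eq_neg, hxm1, hxm3]
  intro h
  rw [h, zero_mul, zero_eq_neg] at hnorm
  exact hnorm_ne hnorm

theorem stmt_19_general (k : Type*) [Field k] (h2 : (2 : k) ≠ 0)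
    (x y : k) (hxy : y ^ 2 = x * (x + 3) * (x - 1))
    (hx : x ∉ ({0, 1, -1, -3, 3} : Set k)) :
    ∃ a b c d : k, a ^ 2 + c ^ 2 = 2 * b ^ 2 ∧ b ^ 2 + d ^ 2 = 2 * c ^ 2 ∧
      ¬(a ^ 2 = b ^ 2 ∧ b ^ 2 = c ^ 2 ∧ c ^ 2 = d ^ 2) := by
  obtain ⟨a, b, c, d, hac, hbd, hdiff⟩ := exists_four_sq_progression_of_curve hxy
  refine ⟨a, b, c, d, hac, hbd, fun ⟨hab, _⟩ => ?_⟩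
  have hx3 : 3 - x ≠ 0 := sub_ne_zero.mpr fun h => hx (by simp [← h])
  have h4 : (4 : k) ≠ 0 := by simpa [show (4 : k) = 2 * 2 by norm_num] using h2
  rw [hab, sub_self] at hdiff
  exact mul_ne_zero (mul_ne_zero h4 hx3) (curve_lines_mul_ne_zero hxy hx) hdiff.symm

/-- In a field of char ≠ 2,3, a point (x, y) with y² = x(x + 3)(x - 1) and
x ∉ {0, 1, -1, -3, 3} produces a non-constant arithmetic progression of four
squares. -/
theorem stmt_19 (k : Type*) [Field k] (h2 : (2 : k) ≠ 0) (h3 : (3 : k) ≠ 0)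
    (x y : k) (hxy : y ^ 2 = x * (x + 3) * (x - 1))
    (hx : x ∉ ({0, 1, -1, -3, 3} : Set k)) :
    ∃ a b c d : k, a ^ 2 + c ^ 2 = 2 * b ^ 2 ∧ b ^ 2 + d ^ 2 = 2 * c ^ 2 ∧
      ¬(a ^ 2 = b ^ 2 ∧ b ^ 2 = c ^ 2 ∧ c ^ 2 = d ^ 2) :=
  stmt_19_general k h2 x y hxy hx
end
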